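/- Let Ω, Ω̃ ⊆ ℝ² be nonempty open sets with Ω ⊆ Ω̃, φ : Ω → Ω̃ a C¹ diffeomorphism with everywhere positive Jacobian determinant, and A : Ω → (real symmetric 2×2 matrices) agreed with φ. Suppose M > 0 satisfies det Dφ(z) ≥ 1/M for every z ∈ Ω, define Λ = inf { (∫_Ω ⟨A(z)∇f(z),∇f(z)⟩ dz) / (∫_Ω |f(z)|² dz) : f continuously differentiable with compact support in Ω, f ≢ 0 } and λ = inf { (∫_{Ω̃} |∇g(w)|² dw) / (∫_{Ω̃} |g(w)|² dw) : g continuously differentiable with compact support in Ω̃, g ≢ 0 }, and assume λ > 0. Then Λ − λ ≥ ((1 − M)/M) · λ. -/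

import Mathlib

open MeasureTheory Set Matrix Filter Topology Function
open scoped RealInnerProductSpace

/-! Transplant a test function `f` on `Ω` to `g = f ∘ ψ` (extended by zero) on `Ω'`. The chain
rule gives `∇f = Jᵀ (∇g ∘ φ)`, so agreement turns `⟪A ∇f, ∇f⟫` into `det J · ‖∇g ∘ φ‖²`, and the
change of variables `w = φ z` identifies the Dirichlet energy of `g` with the `A`-energy of `f`.
Since `det J ≥ 1/M`, the same change of variables gives `∫ f² ≤ M ∫ g²`. Hence every Rayleigh
quotient on `Ω` is at least `λ / M`, so `Λ ≥ λ / M`. -/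

theorem ContDiffOn.contDiff_of_tsupport_subset {𝕜 E F : Type*} [NontriviallyNormedField 𝕜]
    [NormedAddCommGroup E] [NormedSpace 𝕜 E] [NormedAddCommGroup F] [NormedSpace 𝕜 F]
    {n : WithTop ℕ∞} {g : E → F} {U : Set E} (hg : ContDiffOn 𝕜 n g U) (hU : IsOpen U)
    (hsupp : tsupport g ⊆ U) : ContDiff 𝕜 n g := by
  refine contDiff_iff_contDiffAt.mpr fun x => ?_
  by_cases hx : x ∈ U
  · exact hg.contDiffAt (hU.mem_nhds hx)
  · exact contDiffAt_const.congr_of_eventuallyEq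
      (notMem_tsupport_iff_eventuallyEq.mp fun h => hx (hsupp h))

section Transplant

variable {E F G : Type*} {Ω : Set E} {Ω' : Set F} {φ : E → F} {ψ : F → E} {f : E → G}

theorem indicator_comp_apply_of_leftInvOn [Zero G] (hinv : LeftInvOn ψ φ Ω) {z : E}
    (hz : z ∈ Ω) (hφz : φ z ∈ Ω') : Ω'.indicator (f ∘ ψ) (φ z) = f z := by
  rw [indicator_of_mem hφz, Function.comp_apply, hinv hz]

theorem support_indicator_comp_subset [Zero G] (hsurj : SurjOn φ Ω Ω')
    (hinv : LeftInvOn ψ φ Ω) : support (Ω'.indicator (f ∘ ψ)) ⊆ φ '' support f := by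
  intro w hw
  have hwΩ' : w ∈ Ω' := by_contra fun h => hw (indicator_of_notMem h _)
  obtain ⟨z, hz, rfl⟩ := hsurj hwΩ'
  refine ⟨z, ?_, rfl⟩
  rwa [mem_support, ← indicator_comp_apply_of_leftInvOn (f := f) hinv hz hwΩ']

theorem tsupport_indicator_comp_subset [TopologicalSpace E] [TopologicalSpace F] [T2Space F]
    [Zero G] (hsurj : SurjOn φ Ω Ω') (hinv : LeftInvOn ψ φ Ω) (hφ : ContinuousOn φ Ω)
    (hf : HasCompactSupport f) (hfΩ : tsupport f ⊆ Ω) :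
    tsupport (Ω'.indicator (f ∘ ψ)) ⊆ φ '' tsupport f :=
  closure_minimal
    ((support_indicator_comp_subset hsurj hinv).trans (image_mono (subset_tsupport f)))
    (hf.isCompact.image_of_continuousOn (hφ.mono hfΩ)).isClosed

theorem hasCompactSupport_indicator_comp [TopologicalSpace E] [TopologicalSpace F] [T2Space F]
    [Zero G] (hsurj : SurjOn φ Ω Ω') (hinv : LeftInvOn ψ φ Ω) (hφ : ContinuousOn φ Ω)
    (hf : HasCompactSupport f) (hfΩ : tsupport f ⊆ Ω) :
    HasCompactSupport (Ω'.indicator (f ∘ ψ)) :=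
  (hf.isCompact.image_of_continuousOn (hφ.mono hfΩ)).of_isClosed_subset (isClosed_tsupport _)
    (tsupport_indicator_comp_subset hsurj hinv hφ hf hfΩ)

theorem contDiff_indicator_comp [NormedAddCommGroup E] [NormedSpace ℝ E] [NormedAddCommGroup F]
    [NormedSpace ℝ F] [NormedAddCommGroup G] [NormedSpace ℝ G] {n : WithTop ℕ∞}
    (hΩ' : IsOpen Ω') (hψ : ContDiffOn ℝ n ψ Ω') (hf : ContDiff ℝ n f)
    (hsupp : tsupport (Ω'.indicator (f ∘ ψ)) ⊆ Ω') : ContDiff ℝ n (Ω'.indicator (f ∘ ψ)) :=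
  ((hf.comp_contDiffOn hψ).congr fun _ hw => indicator_of_mem hw _).contDiff_of_tsupport_subset
    hΩ' hsupp

end Transplant

section Gradient

variable {E F : Type*} [NormedAddCommGroup E] [InnerProductSpace ℝ E] [CompleteSpace E]
  [NormedAddCommGroup F] [InnerProductSpace ℝ F] [CompleteSpace F]

theorem HasFDerivAt.gradient_comp {φ : E → F} {L : E →L[ℝ] F} {g : F → ℝ} {z : E}
    (hφ : HasFDerivAt φ L z) (hg : DifferentiableAt ℝ g (φ z)) :
    gradient (g ∘ φ) z = L.adjoint (gradient g (φ z)) :=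
  ext_inner_right ℝ fun v => by
    rw [inner_gradient_left, (hg.hasFDerivAt.comp z hφ).fderiv, ContinuousLinearMap.comp_apply,
      ContinuousLinearMap.adjoint_inner_left, inner_gradient_left]

theorem inner_apply_adjoint_self_of_comp_eq_smul_id {L : E →L[ℝ] F} {T : E →L[ℝ] E} {d : ℝ}
    (h : (L ∘L T) ∘L L.adjoint = d • ContinuousLinearMap.id ℝ F) (u : F) :
    ⟪T (L.adjoint u), L.adjoint u⟫ = d * ‖u‖ ^ 2 := by
  have hu : L (T (L.adjoint u)) = d • u := by simpa using DFunLike.congr_fun h u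
  rw [ContinuousLinearMap.adjoint_inner_right, hu, real_inner_smul_left,
    real_inner_self_eq_norm_sq]

end Gradient

section MatrixCLM

variable {ι : Type*} [Fintype ι] [DecidableEq ι]

theorem Matrix.toEuclideanCLM_transpose (J : Matrix ι ι ℝ) :
    toEuclideanCLM (𝕜 := ℝ) Jᵀ = (toEuclideanCLM (𝕜 := ℝ) J).adjoint := by
  rw [← conjTranspose_eq_transpose_of_trivial, ← star_eq_conjTranspose, map_star,
    ContinuousLinearMap.star_eq_adjoint]

theorem Matrix.det_toEuclideanCLM {𝕜 : Type*} [RCLike 𝕜] (J : Matrix ι ι 𝕜) :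
    (toEuclideanCLM (𝕜 := 𝕜) J).det = J.det := by
  rw [ContinuousLinearMap.det, coe_toEuclideanCLM_eq_toEuclideanLin]
  simp only [toLpLin_eq_toLin, LinearMap.det_toLin]

end MatrixCLM

section ChangeOfVariables

variable {E : Type*} [NormedAddCommGroup E] [NormedSpace ℝ E] [FiniteDimensional ℝ E]
  [MeasurableSpace E] [BorelSpace E] (μ : Measure E) [μ.IsAddHaarMeasure]

theorem mul_setIntegral_comp_le_setIntegral_image {s : Set E} {φ : E → E} {φ' : E → E →L[ℝ] E}
    (hs : MeasurableSet s) (hφ' : ∀ x ∈ s, HasFDerivWithinAt φ (φ' x) s x) (hφ : InjOn φ s)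
    {c : ℝ} (hc : 0 ≤ c) (hcφ' : ∀ x ∈ s, c ≤ |(φ' x).det|) {F : E → ℝ} (hF : 0 ≤ F)
    (hFi : IntegrableOn F (φ '' s) μ) :
    c * ∫ x in s, F (φ x) ∂μ ≤ ∫ y in φ '' s, F y ∂μ := by
  rw [integral_image_eq_integral_abs_det_fderiv_smul μ hs hφ' hφ, ← integral_const_mul]
  refine integral_mono_of_nonneg (.of_forall fun x => mul_nonneg hc (hF _))
    ((integrableOn_image_iff_integrableOn_abs_det_fderiv_smul μ hs hφ' hφ F).mp hFi) ?_
  filter_upwards [ae_restrict_mem hs] with x hx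
  exact mul_le_mul_of_nonneg_right (hcφ' x hx) (hF _)

end ChangeOfVariables

theorem HasCompactSupport.sq_abs {X : Type*} [TopologicalSpace X] {f : X → ℝ}
    (hf : HasCompactSupport f) : HasCompactSupport fun x => |f x| ^ 2 :=
  hf.comp_left (g := fun t => |t| ^ 2) (by simp)

theorem setIntegral_sq_abs_pos {X : Type*} [TopologicalSpace X] [MeasurableSpace X]
    [OpensMeasurableSpace X] (μ : Measure X) [μ.IsOpenPosMeasure] [IsFiniteMeasureOnCompacts μ]
    {s : Set X} {f : X → ℝ} (hf : Continuous f) (hfc : HasCompactSupport f)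
    (hfs : support f ⊆ s) (hf0 : f ≠ 0) : 0 < ∫ x in s, |f x| ^ 2 ∂μ := by
  obtain ⟨x, hx⟩ := Function.ne_iff.mp hf0
  have hzero : ∀ y ∉ s, |f y| ^ 2 = 0 := fun y hy => by
    rw [notMem_support.mp fun h => hy (hfs h), abs_zero, zero_pow two_ne_zero]
  rw [setIntegral_eq_integral_of_forall_compl_eq_zero hzero]
  exact (hf.abs.pow 2).integral_pos_of_hasCompactSupport_nonneg_nonzero hfc.sq_abs
    (fun _ => sq_nonneg _) (pow_ne_zero 2 (abs_ne_zero.mpr hx))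

theorem div_le_div_of_le_mul_of_le_div {Q N N' M lam : ℝ} (hQ : 0 ≤ Q) (hN : 0 < N)
    (hNN' : N ≤ M * N') (hM : 0 < M) (hlam : lam ≤ Q / N') : lam / M ≤ Q / N := calc
  lam / M ≤ Q / N' / M := div_le_div_of_nonneg_right hlam hM.le
  _ = Q / (M * N') := by rw [div_div, mul_comm]
  _ ≤ Q / N := div_le_div_of_nonneg_left hQ hN hNN'

section Euclidean

variable {ι : Type*} [Fintype ι] [DecidableEq ι]

theorem HasFDerivAt.inner_toEuclideanCLM_gradient_comp {φ : EuclideanSpace ℝ ι → EuclideanSpace ℝ ι}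
    {J A : Matrix ι ι ℝ} {g : EuclideanSpace ℝ ι → ℝ} {z : EuclideanSpace ℝ ι}
    (hφ : HasFDerivAt φ (toEuclideanCLM (𝕜 := ℝ) J) z) (hg : DifferentiableAt ℝ g (φ z))
    (hagree : J * A * Jᵀ = J.det • 1) :
    ⟪toEuclideanCLM (𝕜 := ℝ) A (gradient (g ∘ φ) z), gradient (g ∘ φ) z⟫ =
      J.det * ‖gradient g (φ z)‖ ^ 2 := by
  rw [hφ.gradient_comp hg]
  refine inner_apply_adjoint_self_of_comp_eq_smul_id ?_ _
  have h := congrArg (toEuclideanCLM (𝕜 := ℝ)) hagree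
  rw [map_mul, map_mul, map_smul, map_one, toEuclideanCLM_transpose] at h
  exact h

theorem setIntegral_inner_gradient_eq_setIntegral_image {Ω : Set (EuclideanSpace ℝ ι)}
    (hΩ : IsOpen Ω) {φ : EuclideanSpace ℝ ι → EuclideanSpace ℝ ι} (hφ : InjOn φ Ω)
    {J A : EuclideanSpace ℝ ι → Matrix ι ι ℝ}
    (hJ : ∀ z ∈ Ω, HasFDerivAt φ (toEuclideanCLM (𝕜 := ℝ) (J z)) z)
    (hagree : ∀ z ∈ Ω, J z * A z * (J z)ᵀ = (J z).det • 1) (hdet : ∀ z ∈ Ω, 0 ≤ (J z).det)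
    {f g : EuclideanSpace ℝ ι → ℝ} (hg : Differentiable ℝ g) (hgf : ∀ z ∈ Ω, g (φ z) = f z) :
    ∫ z in Ω, ⟪toEuclideanCLM (𝕜 := ℝ) (A z) (gradient f z), gradient f z⟫ =
      ∫ w in φ '' Ω, ‖gradient g w‖ ^ 2 := by
  rw [integral_image_eq_integral_abs_det_fderiv_smul volume hΩ.measurableSet
    (fun z hz => (hJ z hz).hasFDerivWithinAt) hφ]
  refine setIntegral_congr_fun hΩ.measurableSet fun z hz => ?_
  have hfg : f =ᶠ[𝓝 z] g ∘ φ :=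
    eventually_of_mem (hΩ.mem_nhds hz) fun z' hz' => (hgf z' hz').symm
  rw [hfg.gradient_eq, (hJ z hz).inner_toEuclideanCLM_gradient_comp (hg _) (hagree z hz),
    det_toEuclideanCLM, abs_of_nonneg (hdet z hz), smul_eq_mul]

theorem div_le_rayleigh_of_agreed {Ω Ω' : Set (EuclideanSpace ℝ ι)} (hΩ : IsOpen Ω)
    (hΩ' : IsOpen Ω') {φ ψ : EuclideanSpace ℝ ι → EuclideanSpace ℝ ι} (hbij : BijOn φ Ω Ω')
    (hinv : LeftInvOn ψ φ Ω) (hψ : ContDiffOn ℝ 1 ψ Ω')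
    {J A : EuclideanSpace ℝ ι → Matrix ι ι ℝ}
    (hJ : ∀ z ∈ Ω, HasFDerivAt φ (toEuclideanCLM (𝕜 := ℝ) (J z)) z)
    (hagree : ∀ z ∈ Ω, J z * A z * (J z)ᵀ = (J z).det • 1) {M : ℝ} (hM : 0 < M)
    (hMdet : ∀ z ∈ Ω, 1 / M ≤ (J z).det) {lam : ℝ}
    (hlam : ∀ g : EuclideanSpace ℝ ι → ℝ, ContDiff ℝ 1 g → HasCompactSupport g →
      tsupport g ⊆ Ω' → g ≠ 0 → lam ≤ (∫ w in Ω', ‖gradient g w‖ ^ 2) / ∫ w in Ω', |g w| ^ 2)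
    {f : EuclideanSpace ℝ ι → ℝ} (hf : ContDiff ℝ 1 f) (hfc : HasCompactSupport f)
    (hfΩ : tsupport f ⊆ Ω) (hf0 : f ≠ 0) :
    lam / M ≤ (∫ z in Ω, ⟪toEuclideanCLM (𝕜 := ℝ) (A z) (gradient f z), gradient f z⟫) /
      ∫ z in Ω, |f z| ^ 2 := by
  set g := Ω'.indicator (f ∘ ψ)
  have hφ : ContinuousOn φ Ω := fun z hz => (hJ z hz).continuousAt.continuousWithinAt
  have hgf : ∀ z ∈ Ω, g (φ z) = f z := fun z hz =>
    indicator_comp_apply_of_leftInvOn hinv hz (hbij.mapsTo hz)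
  have hgΩ' : tsupport g ⊆ Ω' := (tsupport_indicator_comp_subset hbij.surjOn hinv hφ hfc hfΩ).trans
    (hbij.mapsTo.mono_left hfΩ).image_subset
  have hgc : HasCompactSupport g := hasCompactSupport_indicator_comp hbij.surjOn hinv hφ hfc hfΩ
  have hg : ContDiff ℝ 1 g := contDiff_indicator_comp hΩ' hψ hf hgΩ'
  have hg0 : g ≠ 0 := by
    obtain ⟨z, hz⟩ := Function.ne_iff.mp hf0
    intro h
    exact hz (by simpa [h] using (hgf z (hfΩ (subset_tsupport f hz))).symm)
  have hdet : ∀ z ∈ Ω, 0 < (J z).det := fun z hz => (one_div_pos.mpr hM).trans_le (hMdet z hz)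
  have hg2 : IntegrableOn (fun w => |g w| ^ 2) (φ '' Ω) :=
    ((hg.continuous.abs.pow 2).integrable_of_hasCompactSupport hgc.sq_abs).integrableOn
  have hmass : (1 / M) * ∫ z in Ω, |f z| ^ 2 ≤ ∫ w in Ω', |g w| ^ 2 := by
    have hfg : ∫ z in Ω, |f z| ^ 2 = ∫ z in Ω, |g (φ z)| ^ 2 :=
      setIntegral_congr_fun hΩ.measurableSet fun z hz => by rw [hgf z hz]
    rw [hfg, ← hbij.image_eq]
    refine mul_setIntegral_comp_le_setIntegral_image volume hΩ.measurableSet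
      (fun z hz => (hJ z hz).hasFDerivWithinAt) hbij.injOn (one_div_pos.mpr hM).le
      (fun z hz => ?_) (fun _ => sq_nonneg _) hg2
    rw [det_toEuclideanCLM, abs_of_pos (hdet z hz)]
    exact hMdet z hz
  rw [setIntegral_inner_gradient_eq_setIntegral_image hΩ hbij.injOn hJ hagree
    (fun z hz => (hdet z hz).le) (hg.differentiable one_ne_zero) hgf, hbij.image_eq]
  refine div_le_div_of_le_mul_of_le_div (integral_nonneg fun _ => sq_nonneg _)
    (setIntegral_sq_abs_pos volume hf.continuous hfc ((subset_tsupport f).trans hfΩ) hf0) ?_ hM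
    (hlam g hg hgc hgΩ' hg0)
  rwa [one_div, inv_mul_le_iff₀ hM] at hmass

end Euclidean

theorem stmt9_general (Ω Ω' : Set (EuclideanSpace ℝ (Fin 2))) (hΩ : IsOpen Ω) (hΩ' : IsOpen Ω')
    (hΩne : Ω.Nonempty)
    (φ ψ : EuclideanSpace ℝ (Fin 2) → EuclideanSpace ℝ (Fin 2))
    (hbij : Set.BijOn φ Ω Ω') (hinv : ∀ z ∈ Ω, ψ (φ z) = z)
    (hψ : ContDiffOn ℝ 1 ψ Ω')
    (J : EuclideanSpace ℝ (Fin 2) → Matrix (Fin 2) (Fin 2) ℝ)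
    (hJ : ∀ z ∈ Ω, HasFDerivAt φ (Matrix.toEuclideanCLM (𝕜 := ℝ) (J z)) z)
    (A : EuclideanSpace ℝ (Fin 2) → Matrix (Fin 2) (Fin 2) ℝ)
    (hagree : ∀ z ∈ Ω, J z * A z * (J z)ᵀ = (J z).det • (1 : Matrix (Fin 2) (Fin 2) ℝ))
    (M : ℝ) (hM : 0 < M) (hMdet : ∀ z ∈ Ω, 1 / M ≤ (J z).det)
    (Lam lam : ℝ)
    (hLam : Lam = sInf {q : ℝ | ∃ f : EuclideanSpace ℝ (Fin 2) → ℝ,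
      ContDiff ℝ 1 f ∧ HasCompactSupport f ∧ tsupport f ⊆ Ω ∧ f ≠ 0 ∧
      q = (∫ z in Ω, (inner ℝ (Matrix.toEuclideanCLM (𝕜 := ℝ) (A z) (gradient f z))
            (gradient f z) : ℝ)) / ∫ z in Ω, |f z| ^ 2})
    (hlam : lam = sInf {q : ℝ | ∃ g : EuclideanSpace ℝ (Fin 2) → ℝ,
      ContDiff ℝ 1 g ∧ HasCompactSupport g ∧ tsupport g ⊆ Ω' ∧ g ≠ 0 ∧
      q = (∫ w in Ω', ‖gradient g w‖ ^ 2) / ∫ w in Ω', |g w| ^ 2}) :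
    Lam - lam ≥ ((1 - M) / M) * lam := by
  have hlam_le : ∀ g : EuclideanSpace ℝ (Fin 2) → ℝ, ContDiff ℝ 1 g → HasCompactSupport g →
      tsupport g ⊆ Ω' → g ≠ 0 → lam ≤ (∫ w in Ω', ‖gradient g w‖ ^ 2) / ∫ w in Ω', |g w| ^ 2 :=
    fun g hg hgc hgΩ' hg0 => hlam ▸ csInf_le
      ⟨0, by rintro _ ⟨g, -, -, -, -, rfl⟩; positivity⟩ ⟨g, hg, hgc, hgΩ', hg0, rfl⟩
  obtain ⟨z₀, hz₀⟩ := hΩne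
  obtain ⟨b, hbΩ, hbc, hb, -, hb1⟩ :=
    exists_contDiff_tsupport_subset (n := 1) (hΩ.mem_nhds hz₀)
  have hLam_ge : lam / M ≤ Lam := hLam ▸ le_csInf
    ⟨_, b, hb, hbc, hbΩ, fun h => one_ne_zero (hb1 ▸ congrFun h z₀), rfl⟩
    (by rintro _ ⟨f, hf, hfc, hfΩ, hf0, rfl⟩
        exact div_le_rayleigh_of_agreed hΩ hΩ' hbij hinv hψ hJ hagree hM hMdet hlam_le
          hf hfc hfΩ hf0)
  have hkey : (1 - M) / M * lam = lam / M - lam := by field_simp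
  linarith

/-- estimate for the variation of the first Dirichlet eigenvalue under
quasiconformal deformation of the domain: if `Ω ⊆ Ω̃`, `det Dφ ≥ 1/M` on `Ω` and `λ, Λ` are the
Rayleigh quotient infima on `Ω̃` (Laplacian) and on `Ω` (operator `L_A`), then
`Λ − λ ≥ ((1 − M)/M)·λ`. -/
theorem stmt9 (Ω Ω' : Set (EuclideanSpace ℝ (Fin 2))) (hΩ : IsOpen Ω) (hΩ' : IsOpen Ω')
    (hΩne : Ω.Nonempty) (hΩ'ne : Ω'.Nonempty) (hsub : Ω ⊆ Ω')
    (φ ψ : EuclideanSpace ℝ (Fin 2) → EuclideanSpace ℝ (Fin 2))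
    (hbij : Set.BijOn φ Ω Ω') (hinv : ∀ z ∈ Ω, ψ (φ z) = z)
    (hφ : ContDiffOn ℝ 1 φ Ω) (hψ : ContDiffOn ℝ 1 ψ Ω')
    (J : EuclideanSpace ℝ (Fin 2) → Matrix (Fin 2) (Fin 2) ℝ)
    (hJ : ∀ z ∈ Ω, HasFDerivAt φ (Matrix.toEuclideanCLM (𝕜 := ℝ) (J z)) z)
    (hpos : ∀ z ∈ Ω, 0 < (J z).det)
    (A : EuclideanSpace ℝ (Fin 2) → Matrix (Fin 2) (Fin 2) ℝ)
    (hsym : ∀ z ∈ Ω, (A z).IsSymm)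
    (hagree : ∀ z ∈ Ω, J z * A z * (J z)ᵀ = (J z).det • (1 : Matrix (Fin 2) (Fin 2) ℝ))
    (M : ℝ) (hM : 0 < M) (hMdet : ∀ z ∈ Ω, 1 / M ≤ (J z).det)
    (Lam lam : ℝ)
    (hLam : Lam = sInf {q : ℝ | ∃ f : EuclideanSpace ℝ (Fin 2) → ℝ,
      ContDiff ℝ 1 f ∧ HasCompactSupport f ∧ tsupport f ⊆ Ω ∧ f ≠ 0 ∧
      q = (∫ z in Ω, (inner ℝ (Matrix.toEuclideanCLM (𝕜 := ℝ) (A z) (gradient f z))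
            (gradient f z) : ℝ)) / ∫ z in Ω, |f z| ^ 2})
    (hlam : lam = sInf {q : ℝ | ∃ g : EuclideanSpace ℝ (Fin 2) → ℝ,
      ContDiff ℝ 1 g ∧ HasCompactSupport g ∧ tsupport g ⊆ Ω' ∧ g ≠ 0 ∧
      q = (∫ w in Ω', ‖gradient g w‖ ^ 2) / ∫ w in Ω', |g w| ^ 2})
    (hlampos : 0 < lam) :
    Lam - lam ≥ ((1 - M) / M) * lam :=
  stmt9_general Ω Ω' hΩ hΩ' hΩne φ ψ hbij hinv hψ J hJ A hagree M hM hMdet Lam lam hLam hlam
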